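/- arXiv:1709.01370 — 3 statements merged into one kernel-verified Lean document; each statement's English description precedes it below -/
import Mathlib

section
/- Let γ : [0,1] → ℂ be an injective continuously differentiable curve with γ'(s) ≠ 0 for all s ∈ [0,1]. Let θ : [0,1] → ℝ be continuous with γ'(t) = |γ'(t)|·exp(iθ(t)) for all t; let a : [0,1) → ℝ be continuous with γ(t) − γ(1) = |γ(t) − γ(1)|·exp(i a(t)) for all t < 1; and let b : (0,1] → ℝ be continuous with γ(t) − γ(0) = |γ(t) − γ(0)|·exp(i b(t)) for all t > 0. Then the limits L₁ = lim_{t→1⁻} a(t) and L₀ = lim_{t→0⁺} b(t) exist in ℝ, and the intrinsic winding satisfies θ(1) − θ(0) = (L₁ − a(0)) + (b(1) − L₀). -/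
/-!
The secant map `(s, t) ↦ (γ t - γ s) / (t - s)`, extended by `γ'` on the diagonal, is continuous
and nonvanishing on the square `[0,1]²` (by injectivity off the diagonal, by `γ' ≠ 0` on it).
The square is simply connected, so the secant map has a continuous argument `Θ`. On the diagonal,
on the edge `t = 1` and on the edge `s = 0`, `Θ` differs by constants from `θ`, from `a + π` and
from `b` respectively. Hence the limits exist, and `θ 1 - θ 0 = Θ (1,1) - Θ (0,0)` splits at the
corner `(0,1)` into the two endpoint windings.
-/

open Set Filter

section SecantMap

variable {E : Type*} [NormedAddCommGroup E] [NormedSpace ℝ E] [CompleteSpace E]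

theorem smul_integral_comp_segment_eq_sub {f g : ℝ → E} {a b : ℝ} (hg : Continuous g)
    (hf : ∀ x ∈ Icc a b, HasDerivWithinAt f (g x) (Icc a b) x) {s t : ℝ}
    (hs : s ∈ Icc a b) (ht : t ∈ Icc a b) :
    (t - s) • ∫ u in (0 : ℝ)..1, g (s + u * (t - s)) = f t - f s := by
  have hsub : uIcc s t ⊆ Icc a b := uIcc_subset_Icc hs ht
  have hsegment : ∫ u in (0 : ℝ)..1, g (s + u * (t - s)) =
      ∫ u in (0 : ℝ)..1, g ((t - s) * u + s) := by
    congr 1 with u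
    ring_nf
  rw [hsegment, intervalIntegral.smul_integral_comp_mul_add, mul_zero, zero_add, mul_one,
    sub_add_cancel]
  refine intervalIntegral.integral_eq_sub_of_hasDeriv_right
    (fun x hx ↦ (hf x (hsub hx)).continuousWithinAt.mono hsub) (fun x hx ↦ ?_)
    (hg.intervalIntegrable _ _)
  have hx : x ∈ Ioo a b := ⟨(le_min hs.1 ht.1).trans_lt hx.1, hx.2.trans_le (max_le hs.2 ht.2)⟩
  exact ((hf x (Ioo_subset_Icc_self hx)).hasDerivAt (Icc_mem_nhds hx.1 hx.2)).hasDerivWithinAt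

/-- The secant map is the mean of `f'` over the segment `[s, t]`, which makes its continuity
across the diagonal a matter of continuity of parametric integrals. -/
theorem exists_continuous_secant {f f' : ℝ → E} {a b : ℝ} (hab : a ≤ b)
    (hf : ∀ x ∈ Icc a b, HasDerivWithinAt f (f' x) (Icc a b) x)
    (hf' : ContinuousOn f' (Icc a b)) :
    ∃ H : ℝ × ℝ → E, Continuous H ∧ (∀ x ∈ Icc a b, H (x, x) = f' x) ∧
      ∀ s ∈ Icc a b, ∀ t ∈ Icc a b, (t - s) • H (s, t) = f t - f s := by
  set g := IccExtend hab ((Icc a b).domRestrict f')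
  have hg : Continuous g := continuous_IccExtend_iff.mpr hf'.domRestrict
  have hgf' : ∀ x ∈ Icc a b, g x = f' x := fun x hx ↦ IccExtend_of_mem hab _ hx
  refine ⟨fun p ↦ ∫ u in (0 : ℝ)..1, g (p.1 + u * (p.2 - p.1)), by fun_prop,
    fun x hx ↦ by simp [hgf' x hx], fun s hs t ht ↦ ?_⟩
  exact smul_integral_comp_segment_eq_sub hg (fun x hx ↦ (hgf' x hx).symm ▸ hf x hx) hs ht

end SecantMap

section ArgumentLifts

open Complex

theorem Complex.exp_eq_norm_mul_exp_im_mul_I (z : ℂ) : exp z = ‖exp z‖ * exp (z.im * I) := by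
  conv_lhs => rw [← re_add_im z]
  rw [exp_add, norm_exp, ofReal_exp]

theorem Complex.real_smul_eq_norm_mul_exp {z : ℂ} {r x : ℝ} (hr : 0 ≤ r)
    (h : z = ‖z‖ * exp (x * I)) : r • z = ‖r • z‖ * exp (x * I) := by
  rw [norm_smul, Real.norm_of_nonneg hr, real_smul, ofReal_mul, mul_assoc, ← h]

theorem Complex.neg_eq_norm_mul_exp_add_pi {z : ℂ} {x : ℝ} (h : z = ‖z‖ * exp (x * I)) :
    -z = ‖-z‖ * exp ((x + Real.pi : ℝ) * I) := by
  rw [norm_neg, ofReal_add, add_mul, exp_add, exp_pi_mul_I]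
  linear_combination -h

theorem Convex.exists_continuousOn_arg_lift {F : Type*} [NormedAddCommGroup F]
    [NormedSpace ℝ F] {S : Set F} (hS : Convex ℝ S) (hSne : S.Nonempty) {g : F → ℂ}
    (hg : ContinuousOn g S) (hg₀ : ∀ x ∈ S, g x ≠ 0) :
    ∃ Θ : F → ℝ, ContinuousOn Θ S ∧ ∀ x ∈ S, g x = ‖g x‖ * exp (Θ x * I) := by
  classical
  have := hS.contractibleSpace hSne
  have := hS.locallyPathConnectedSpace
  obtain ⟨x₀, hx₀⟩ := hSne
  obtain ⟨L, ⟨-, hL⟩, -⟩ := isCoveringMapOn_exp.existsUnique_continuousMap_lifts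
    ⟨S.domRestrict g, hg.domRestrict⟩ (a₀ := ⟨x₀, hx₀⟩) (exp_log (hg₀ x₀ hx₀))
    fun x ↦ hg₀ x x.2
  have hLg (x : S) : exp (L x) = g x := congr_fun hL x
  refine ⟨fun x ↦ if hx : x ∈ S then (L ⟨x, hx⟩).im else 0, ?_, fun x hx ↦ ?_⟩
  · rw [continuousOn_iff_continuous_domRestrict]
    convert continuous_im.comp L.continuous using 1
    ext x
    simp [x.2]
  · simpa [hx, hLg] using exp_eq_norm_mul_exp_im_mul_I (L ⟨x, hx⟩)

theorem IsPreconnected.exists_eq_add_const_of_arg_lifts {X : Type*} [TopologicalSpace X]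
    {s : Set X} (hs : IsPreconnected s) {g : X → ℂ} (hg₀ : ∀ x ∈ s, g x ≠ 0) {θ₁ θ₂ : X → ℝ}
    (hθ₁ : ContinuousOn θ₁ s) (hθ₂ : ContinuousOn θ₂ s)
    (h₁ : ∀ x ∈ s, g x = ‖g x‖ * exp (θ₁ x * I)) (h₂ : ∀ x ∈ s, g x = ‖g x‖ * exp (θ₂ x * I)) :
    ∃ c : ℝ, ∀ x ∈ s, θ₁ x = θ₂ x + c := by
  rcases s.eq_empty_or_nonempty with rfl | ⟨x₀, hx₀⟩
  · simp
  have hmaps : MapsTo (θ₁ - θ₂) s (AddSubgroup.zmultiples (2 * Real.pi)) := by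
    intro x hx
    have hnorm : (‖g x‖ : ℂ) ≠ 0 := by simpa using hg₀ x hx
    obtain ⟨n, hn⟩ := exp_eq_exp_iff_exists_int.mp
      (mul_left_cancel₀ hnorm ((h₁ x hx).symm.trans (h₂ x hx)))
    have hθ : θ₁ x = θ₂ x + n * (2 * Real.pi) := by simpa using congr_arg im hn
    exact ⟨n, by simp [hθ]⟩
  have hdiscrete : IsDiscrete (AddSubgroup.zmultiples (2 * Real.pi) : Set ℝ) :=
    isDiscrete_iff_discreteTopology.mpr
      (inferInstanceAs (DiscreteTopology (AddSubgroup.zmultiples (2 * Real.pi))))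
  refine ⟨θ₁ x₀ - θ₂ x₀, fun x hx ↦ ?_⟩
  have := hs.constant_of_mapsTo hdiscrete (hθ₁.sub hθ₂) hmaps hx hx₀
  simp only [Pi.sub_apply] at this
  linarith

end ArgumentLifts

theorem exists_continuousOn_arg_secant {γ γ' : ℝ → ℂ} {a b : ℝ} (hab : a ≤ b)
    (hInj : InjOn γ (Icc a b)) (hderiv : ∀ t ∈ Icc a b, HasDerivWithinAt γ (γ' t) (Icc a b) t)
    (hcont : ContinuousOn γ' (Icc a b)) (hne : ∀ t ∈ Icc a b, γ' t ≠ 0) :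
    ∃ Θ : ℝ × ℝ → ℝ, ContinuousOn Θ (Icc a b ×ˢ Icc a b) ∧
      (∀ t ∈ Icc a b, γ' t = ‖γ' t‖ * Complex.exp (Θ (t, t) * Complex.I)) ∧
      ∀ s ∈ Icc a b, ∀ t ∈ Icc a b, s ≤ t →
        γ t - γ s = ‖γ t - γ s‖ * Complex.exp (Θ (s, t) * Complex.I) := by
  obtain ⟨H, hHc, hHdiag, hHsec⟩ := exists_continuous_secant hab hderiv hcont
  have hH₀ : ∀ p ∈ Icc a b ×ˢ Icc a b, H p ≠ 0 := by
    rintro ⟨s, t⟩ ⟨hs, ht⟩ hH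
    rcases eq_or_ne s t with rfl | hst
    · exact hne s hs (hHdiag s hs ▸ hH)
    · have := hHsec s hs t ht
      rw [hH, smul_zero, eq_comm, sub_eq_zero] at this
      exact hst (hInj ht hs this).symm
  have ha : a ∈ Icc a b := left_mem_Icc.2 hab
  obtain ⟨Θ, hΘc, hΘ⟩ := ((convex_Icc a b).prod (convex_Icc a b)).exists_continuousOn_arg_lift
    ⟨(a, a), ha, ha⟩ hHc.continuousOn hH₀
  refine ⟨Θ, hΘc, fun t ht ↦ hHdiag t ht ▸ hΘ _ ⟨ht, ht⟩, fun s hs t ht hst ↦ ?_⟩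
  exact hHsec s hs t ht ▸ Complex.real_smul_eq_norm_mul_exp (sub_nonneg.2 hst) (hΘ _ ⟨hs, ht⟩)

/-- Intrinsic winding equals the sum of the topological windings around the two
endpoints, for a smooth injective curve `γ : [0,1] → ℂ` with nonvanishing
derivative `γ'`. Here `θ` is a continuous argument lift of `γ'`, `a` is a
continuous argument lift of `t ↦ γ t - γ 1` on `[0,1)`, and `b` is a continuous
argument lift of `t ↦ γ t - γ 0` on `(0,1]`. The limits `L₁ = lim_{t→1⁻} a(t)`
and `L₀ = lim_{t→0⁺} b(t)` exist, and
`θ(1) - θ(0) = (L₁ - a(0)) + (b(1) - L₀)`, i.e.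
`W_int(γ) = W(γ, γ(1)) + W(γ, γ(0))`. -/
theorem stmt2 (γ γ' : ℝ → ℂ) (θ a b : ℝ → ℝ)
    (hInj : Set.InjOn γ (Set.Icc 0 1))
    (hderiv : ∀ t ∈ Set.Icc (0 : ℝ) 1, HasDerivWithinAt γ (γ' t) (Set.Icc 0 1) t)
    (hcont : ContinuousOn γ' (Set.Icc 0 1))
    (hne : ∀ t ∈ Set.Icc (0 : ℝ) 1, γ' t ≠ 0)
    (hθcont : ContinuousOn θ (Set.Icc 0 1))
    (hθ : ∀ t ∈ Set.Icc (0 : ℝ) 1,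
      γ' t = (‖γ' t‖ : ℂ) * Complex.exp ((θ t : ℂ) * Complex.I))
    (hacont : ContinuousOn a (Set.Ico 0 1))
    (ha : ∀ t ∈ Set.Ico (0 : ℝ) 1,
      γ t - γ 1 = (‖γ t - γ 1‖ : ℂ) * Complex.exp ((a t : ℂ) * Complex.I))
    (hbcont : ContinuousOn b (Set.Ioc 0 1))
    (hb : ∀ t ∈ Set.Ioc (0 : ℝ) 1,
      γ t - γ 0 = (‖γ t - γ 0‖ : ℂ) * Complex.exp ((b t : ℂ) * Complex.I)) :
    ∃ L₁ L₀ : ℝ,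
      Tendsto a (nhdsWithin 1 (Set.Ico 0 1)) (nhds L₁) ∧
      Tendsto b (nhdsWithin 0 (Set.Ioc 0 1)) (nhds L₀) ∧
      θ 1 - θ 0 = (L₁ - a 0) + (b 1 - L₀) := by
  have h0 : (0 : ℝ) ∈ Icc (0 : ℝ) 1 := left_mem_Icc.2 zero_le_one
  have h1 : (1 : ℝ) ∈ Icc (0 : ℝ) 1 := right_mem_Icc.2 zero_le_one
  obtain ⟨Θ, hΘc, hΘdiag, hΘsec⟩ :=
    exists_continuousOn_arg_secant zero_le_one hInj hderiv hcont hne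
  have hdiag : ContinuousOn (fun t ↦ Θ (t, t)) (Icc 0 1) :=
    hΘc.comp (by fun_prop) fun t ht ↦ ⟨ht, ht⟩
  have htop : ContinuousOn (fun t ↦ Θ (t, 1)) (Icc 0 1) :=
    hΘc.comp (by fun_prop) fun t ht ↦ ⟨ht, h1⟩
  have hleft : ContinuousOn (fun t ↦ Θ (0, t)) (Icc 0 1) :=
    hΘc.comp (by fun_prop) fun t ht ↦ ⟨h0, ht⟩
  obtain ⟨c₀, hc₀⟩ :=
    isPreconnected_Icc.exists_eq_add_const_of_arg_lifts hne hdiag hθcont hΘdiag hθ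
  obtain ⟨c₁, hc₁⟩ := isPreconnected_Ico.exists_eq_add_const_of_arg_lifts
    (g := fun t ↦ γ 1 - γ t) (θ₁ := fun t ↦ a t + Real.pi)
    (fun t ht ↦ sub_ne_zero.2 fun h ↦ ht.2.ne (hInj ⟨ht.1, ht.2.le⟩ h1 h.symm))
    (hacont.add continuousOn_const) (htop.mono Ico_subset_Icc_self)
    (fun t ht ↦ by simpa using Complex.neg_eq_norm_mul_exp_add_pi (ha t ht))
    (fun t ht ↦ hΘsec t ⟨ht.1, ht.2.le⟩ 1 h1 ht.2.le)
  obtain ⟨c₂, hc₂⟩ := isPreconnected_Ioc.exists_eq_add_const_of_arg_lifts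
    (g := fun t ↦ γ t - γ 0)
    (fun t ht ↦ sub_ne_zero.2 fun h ↦ ht.1.ne' (hInj ⟨ht.1.le, ht.2⟩ h0 h))
    hbcont (hleft.mono Ioc_subset_Icc_self) hb (fun t ht ↦ hΘsec 0 h0 t ⟨ht.1.le, ht.2⟩ ht.1.le)
  refine ⟨Θ (1, 1) + c₁ - Real.pi, Θ (0, 0) + c₂, ?_, ?_, ?_⟩
  · refine tendsto_nhdsWithin_congr (f := fun t ↦ Θ (t, 1) + c₁ - Real.pi)
      (fun t ht ↦ by linarith [hc₁ t ht]) ?_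
    exact (((htop 1 h1).mono Ico_subset_Icc_self).tendsto.add_const c₁).sub_const Real.pi
  · refine tendsto_nhdsWithin_congr (fun t ht ↦ (hc₂ t ht).symm) ?_
    exact ((hleft 0 h0).mono Ioc_subset_Icc_self).tendsto.add_const c₂
  · linarith [hc₀ 0 h0, hc₀ 1 h1, hc₁ 0 ⟨le_rfl, zero_lt_one⟩, hc₂ 1 ⟨zero_lt_one, le_rfl⟩]
end

section
/- Let G be a simple graph and let M, M' be matchings of G. Then the loop-flip M'' of M' towards M is a matching of G whose support (vertex set covered) equals the support of M'. -/
/-!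
A vertex of a cycle component of `M ⊔ M'` has exactly two neighbours there; as `M` and `M'` are
matchings, one is its `M`-partner and the other its `M'`-partner. Hence at every vertex the
loop-flip keeps the edges of exactly one of the two matchings, so partners stay unique, and a
vertex of a cycle component is covered by both `M` and `M'`, so the support is that of `M'`.
-/

variable {V : Type*} {G : SimpleGraph V}

/-- The vertex set of the connected component of `v` in the subgraph `H`:
all vertices reachable from `v` using edges of `H`. -/
def reachSet (H : G.Subgraph) (v : V) : Set V := {w | Relation.ReflTransGen H.Adj v w}

/-- `v` lies in a cycle component of the subgraph `H`: its connected component in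
`H` is finite and every vertex of the component is incident to exactly two edges
of `H` (i.e. has exactly two neighbours). -/
def InCycleComp (H : G.Subgraph) (v : V) : Prop :=
  (reachSet H v).Finite ∧ ∀ w ∈ reachSet H v, {u | H.Adj w u}.ncard = 2

lemma reachSet_eq_of_adj {H : G.Subgraph} {v w : V} (h : H.Adj v w) :
    reachSet H v = reachSet H w := by
  ext u
  constructor
  · intro hu
    exact Relation.ReflTransGen.trans (Relation.ReflTransGen.single h.symm) hu
  · intro hu
    exact Relation.ReflTransGen.trans (Relation.ReflTransGen.single h) hu

lemma inCycleComp_iff_of_adj {H : G.Subgraph} {v w : V} (h : H.Adj v w) :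
    InCycleComp H v ↔ InCycleComp H w := by
  unfold InCycleComp
  rw [reachSet_eq_of_adj h]

/-- The loop-flip of `M'` towards `M`: the subgraph of `M ⊔ M'` whose edges are
the edges of `M` lying in a cycle component of `M ⊔ M'` together with the edges
of `M'` not lying in a cycle component of `M ⊔ M'`. Its vertex set is the set of
covered vertices (its support). -/
def loopFlip (M M' : G.Subgraph) : G.Subgraph where
  verts := {v | ∃ w, (M.Adj v w ∧ InCycleComp (M ⊔ M') v) ∨
    (M'.Adj v w ∧ ¬ InCycleComp (M ⊔ M') v)}
  Adj v w := (M.Adj v w ∧ InCycleComp (M ⊔ M') v) ∨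
    (M'.Adj v w ∧ ¬ InCycleComp (M ⊔ M') v)
  adj_sub := by
    rintro v w (⟨h, -⟩ | ⟨h, -⟩)
    · exact M.adj_sub h
    · exact M'.adj_sub h
  edge_vert := by
    intro v w h
    exact ⟨w, h⟩
  symm := by
    constructor
    rintro v w (⟨h, hc⟩ | ⟨h, hc⟩)
    · exact Or.inl ⟨h.symm,
        (inCycleComp_iff_of_adj (H := M ⊔ M')
          (SimpleGraph.Subgraph.sup_adj.mpr (Or.inl h))).mp hc⟩
    · refine Or.inr ⟨h.symm, fun hcw => hc ?_⟩
      exact (inCycleComp_iff_of_adj (H := M ⊔ M')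
        (SimpleGraph.Subgraph.sup_adj.mpr (Or.inr h))).mpr hcw

section LoopFlip

variable {M M' : G.Subgraph} {v w : V}

lemma exists_adj_of_ncard_neighborSet_sup_eq_two {H K : G.Subgraph} (hK : K.IsMatching)
    (h : ((H ⊔ K).neighborSet v).ncard = 2) : ∃ w, H.Adj v w := by
  by_contra! hH
  have hle : ((H ⊔ K).neighborSet v).ncard ≤ 1 :=
    (Set.ncard_le_one (Set.finite_of_ncard_pos (by omega))).2 fun a ha b hb =>
      hK.eq_of_adj_left (ha.resolve_left (hH a)) (hb.resolve_left (hH b))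
  omega

lemma exists_adj_of_inCycleComp_sup (hM : M.IsMatching) (hM' : M'.IsMatching)
    (hc : InCycleComp (M ⊔ M') v) : (∃ w, M.Adj v w) ∧ ∃ w, M'.Adj v w := by
  have htwo : ((M ⊔ M').neighborSet v).ncard = 2 := hc.2 v .refl
  refine ⟨exists_adj_of_ncard_neighborSet_sup_eq_two hM' htwo, ?_⟩
  rw [sup_comm] at htwo
  exact exists_adj_of_ncard_neighborSet_sup_eq_two hM htwo

lemma loopFlip_adj_of_inCycleComp (hc : InCycleComp (M ⊔ M') v) :
    (loopFlip M M').Adj v w ↔ M.Adj v w := by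
  simp [loopFlip, hc]

lemma loopFlip_adj_of_not_inCycleComp (hc : ¬ InCycleComp (M ⊔ M') v) :
    (loopFlip M M').Adj v w ↔ M'.Adj v w := by
  simp [loopFlip, hc]

lemma loopFlip_isMatching (hM : M.IsMatching) (hM' : M'.IsMatching) :
    (loopFlip M M').IsMatching := by
  intro v hv
  obtain ⟨w, hw⟩ : ∃ w, (loopFlip M M').Adj v w := hv
  refine ⟨w, hw, fun u hu => ?_⟩
  by_cases hc : InCycleComp (M ⊔ M') v
  · rw [loopFlip_adj_of_inCycleComp hc] at hw hu
    exact hM.eq_of_adj_left hu hw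
  · rw [loopFlip_adj_of_not_inCycleComp hc] at hw hu
    exact hM'.eq_of_adj_left hu hw

lemma loopFlip_support (hM : M.IsMatching) (hM' : M'.IsMatching) :
    (loopFlip M M').support = M'.support := by
  ext v
  simp only [SimpleGraph.Subgraph.mem_support]
  by_cases hc : InCycleComp (M ⊔ M') v
  · simp only [loopFlip_adj_of_inCycleComp hc]
    obtain ⟨hMv, hM'v⟩ := exists_adj_of_inCycleComp_sup hM hM' hc
    exact iff_of_true hMv hM'v
  · simp only [loopFlip_adj_of_not_inCycleComp hc]

end LoopFlip

/-- The loop-flip `M''` of `M'` towards `M` of two matchings is a matching whose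
support (set of covered vertices) equals the support of `M'`. -/
theorem stmt4 (M M' : G.Subgraph) (hM : M.IsMatching) (hM' : M'.IsMatching) :
    (loopFlip M M').IsMatching ∧ (loopFlip M M').support = M'.support :=
  ⟨loopFlip_isMatching hM hM', loopFlip_support hM hM'⟩
end

section
/- Let V be a type, X = (x_0, …, x_n) a finite sequence in V, and 0 ≤ T ≤ n. Let Y = (Y_0, …, Y_m) be the forward loop-erasure of the initial segment (x_0, …, x_T). Let S = min{ s : Y_s ∈ {x_T, …, x_n} } (which exists since Y_m = x_T), and let τ = max{ t ≤ n : x_t = Y_S } (which satisfies τ ≥ T). Then the forward loop-erasure of X equals the concatenation of (Y_0, …, Y_S) with the forward loop-erasure of (x_τ, …, x_n) with its first entry removed. -/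
/-- Auxiliary accumulator-based loop erasure: the accumulator is the loop-erasure
of the part of the path already processed. When the next point `x` already appears
in the accumulator, the accumulated path is truncated just after the earlier
occurrence of `x`; this implements the recursive definition of the forward
loop-erasure (erase the first chronological loop and recurse). -/
def loopEraseAux {V : Type*} [DecidableEq V] : List V → List V → List V
  | acc, [] => acc
  | acc, x :: xs =>
    if x ∈ acc then loopEraseAux (acc.takeWhile (fun y => y ≠ x) ++ [x]) xs
    else loopEraseAux (acc ++ [x]) xs

/-- Forward loop-erasure `E→` of a finite sequence. -/
def fwdLE {V : Type*} [DecidableEq V] (l : List V) : List V := loopEraseAux [] l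

/-!
Run the accumulator form of the erasure from the state `Y = E→(x_0, …, x_T)`. The points
`x_{T+1}, …, x_n` never meet `Y_0, …, Y_{S-1}`, so these entries are never touched and the
accumulator keeps the form `(Y_0, …, Y_{S-1}) ++ B` with `B` starting at `Y_S = v`. At the
last visit `τ` to `v` the accumulator ends in `v`, and being duplicate-free it is exactly
`(Y_0, …, Y_S)`. After `τ` the path avoids all of `Y_0, …, Y_S`, so from then on the erasure
only appends the loop-erasure of `(x_{τ+1}, …, x_n)`.
-/

section LoopErasure

variable {V : Type*} [DecidableEq V]

theorem loopEraseAux_append (acc xs ys : List V) :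
    loopEraseAux acc (xs ++ ys) = loopEraseAux (loopEraseAux acc xs) ys := by
  induction xs generalizing acc with
  | nil => rfl
  | cons x xs ih => simp only [List.cons_append, loopEraseAux]; split <;> apply ih

theorem fwdLE_eq_loopEraseAux_take_drop (l : List V) (n : ℕ) :
    fwdLE l = loopEraseAux (fwdLE (l.take n)) (l.drop n) := by
  rw [fwdLE, fwdLE, ← loopEraseAux_append, List.take_append_drop]

theorem fwdLE_concat_getLast? (l : List V) (x : V) : (fwdLE (l ++ [x])).getLast? = some x := by
  rw [fwdLE, loopEraseAux_append]
  simp only [loopEraseAux]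
  split <;> exact List.getLast?_concat

theorem nodup_loopEraseAux {acc : List V} (hacc : acc.Nodup) (xs : List V) :
    (loopEraseAux acc xs).Nodup := by
  induction xs generalizing acc with
  | nil => exact hacc
  | cons x xs ih =>
    simp only [loopEraseAux]
    split
    · have hx : x ∉ acc.takeWhile (fun y => y ≠ x) := fun hx => by
        simpa using List.mem_takeWhile_imp hx
      exact ih (by simpa using ((List.takeWhile_sublist _).nodup hacc).concat hx)
    · exact ih (by simpa using hacc.concat ‹_›)

theorem nodup_fwdLE (l : List V) : (fwdLE l).Nodup :=
  nodup_loopEraseAux List.nodup_nil l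

theorem head?_loopEraseAux {acc : List V} (hacc : acc ≠ []) (xs : List V) :
    (loopEraseAux acc xs).head? = acc.head? := by
  induction xs generalizing acc with
  | nil => rfl
  | cons x xs ih =>
    obtain ⟨a, acc, rfl⟩ := List.exists_cons_of_ne_nil hacc
    simp only [loopEraseAux]
    split
    · by_cases hax : a = x
      · subst hax
        simp [ih]
      · rw [ih (by simp [hax])]
        simp [hax]
    · rw [ih (by simp)]
      simp

theorem loopEraseAux_append_left {P xs : List V} (h : ∀ x ∈ xs, x ∉ P) (A : List V) :
    loopEraseAux (P ++ A) xs = P ++ loopEraseAux A xs := by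
  induction xs generalizing A with
  | nil => rfl
  | cons x xs ih =>
    have hxP : x ∉ P := h x List.mem_cons_self
    have hP : ∀ y ∈ P, decide (y ≠ x) = true :=
      fun y hy => decide_eq_true (ne_of_mem_of_not_mem hy hxP)
    have ih := ih fun y hy => h y (List.mem_cons_of_mem x hy)
    simp only [loopEraseAux, List.mem_append, hxP, false_or, List.takeWhile_append_of_pos hP]
    split <;> simp only [List.append_assoc, ih]

theorem loopEraseAux_eq_append_fwdLE {P xs : List V} (h : ∀ x ∈ xs, x ∉ P) :
    loopEraseAux P xs = P ++ fwdLE xs := by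
  rw [fwdLE, ← loopEraseAux_append_left h [], List.append_nil]

theorem fwdLE_cons_of_not_mem {v : V} {xs : List V} (hv : v ∉ xs) :
    fwdLE (v :: xs) = v :: fwdLE xs := by
  rw [fwdLE, loopEraseAux, if_neg List.not_mem_nil, List.nil_append,
    loopEraseAux_eq_append_fwdLE fun x hx hxv => hv (by rwa [List.mem_singleton.1 hxv] at hx),
    List.singleton_append]

theorem List.mem_drop_iff_getElem? {α : Type*} {l : List α} {n : ℕ} {x : α} :
    x ∈ l.drop n ↔ ∃ i, n ≤ i ∧ l[i]? = some x := by
  simp only [List.mem_iff_getElem?, List.getElem?_drop]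
  constructor
  · rintro ⟨i, h⟩
    exact ⟨n + i, by omega, h⟩
  · rintro ⟨i, hi, h⟩
    exact ⟨i - n, by rwa [Nat.add_sub_cancel' (by omega)]⟩

theorem List.eq_singleton_of_nodup_of_head?_of_getLast? {α : Type*} {l : List α} {a : α}
    (hl : l.Nodup) (hhead : l.head? = some a) (hlast : l.getLast? = some a) : l = [a] := by
  obtain ⟨t, rfl⟩ : ∃ t, l = a :: t := List.head?_eq_some_iff.1 hhead
  cases t with
  | nil => rfl
  | cons b t =>
    rw [List.getLast?_cons_cons] at hlast
    exact absurd (List.mem_of_getLast? hlast) (List.nodup_cons.1 hl).1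

theorem loopEraseAux_eq_take_succ {Y xs : List V} {S : ℕ} {v : V} (hY : Y.Nodup)
    (hv : Y[S]? = some v) (hxs : ∀ x ∈ xs, x ∉ Y.take S)
    (hlast : (loopEraseAux Y xs).getLast? = some v) :
    loopEraseAux Y xs = Y.take (S + 1) := by
  have hsplit := loopEraseAux_append_left hxs (Y.drop S)
  have hhead : (loopEraseAux (Y.drop S) xs).head? = some v := by
    rw [head?_loopEraseAux (by simp [List.drop_eq_nil_iff, (List.getElem?_eq_some_iff.1 hv).1])]
    rw [List.head?_drop, hv]
  have hne : loopEraseAux (Y.drop S) xs ≠ [] := by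
    rintro h
    simp [h] at hhead
  rw [List.take_append_drop] at hsplit
  rw [hsplit, List.take_add_one, hv, Option.toList_some]
  congr 1
  refine List.eq_singleton_of_nodup_of_head?_of_getLast? ?_ hhead ?_
  · exact (hsplit ▸ nodup_loopEraseAux hY xs).of_append_right
  · rwa [hsplit, List.getLast?_append_of_ne_nil _ hne] at hlast

theorem fwdLE_take_eq_take_succ {l : List V} {T τ S : ℕ} {v : V} (hTτ : T ≤ τ)
    (hτv : l[τ]? = some v) (hSv : (fwdLE (l.take (T + 1)))[S]? = some v)
    (hprefix : ∀ x ∈ l.drop (T + 1), x ∉ (fwdLE (l.take (T + 1))).take S) :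
    fwdLE (l.take (τ + 1)) = (fwdLE (l.take (T + 1))).take (S + 1) := by
  have hlast : (fwdLE (l.take (τ + 1))).getLast? = some v := by
    rw [List.take_add_one, hτv, Option.toList_some]
    exact fwdLE_concat_getLast? _ v
  rw [fwdLE_eq_loopEraseAux_take_drop _ (T + 1), List.take_take, min_eq_left (by omega)]
    at hlast ⊢
  exact loopEraseAux_eq_take_succ (nodup_fwdLE _) hSv
    (fun x hx => hprefix x (((List.take_sublist _ l).drop _).subset hx)) hlast

end LoopErasure

theorem stmt10_general (V : Type*) [DecidableEq V] (l : List V) (T S τ : ℕ) (v : V)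
    (hSv : (fwdLE (l.take (T + 1)))[S]? = some v)
    (hSmem : v ∈ l.drop T)
    (hSmin : ∀ s < S, ∀ u, (fwdLE (l.take (T + 1)))[s]? = some u → u ∉ l.drop T)
    (hτv : l[τ]? = some v)
    (hτmax : ∀ t, τ < t → ∀ u, l[t]? = some u → u ≠ v) :
    T ≤ τ ∧
      fwdLE l = (fwdLE (l.take (T + 1))).take (S + 1) ++ (fwdLE (l.drop τ)).tail := by
  set Y := fwdLE (l.take (T + 1))
  have hTτ : T ≤ τ := by
    obtain ⟨t, hTt, ht⟩ := List.mem_drop_iff_getElem?.1 hSmem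
    by_contra! h
    exact hτmax t (by omega) v ht rfl
  have hprefix : ∀ x ∈ l.drop T, x ∉ Y.take S := by
    intro x hx hxY
    obtain ⟨s, hs⟩ := List.mem_iff_getElem?.1 hxY
    rw [List.getElem?_take] at hs
    split_ifs at hs with h
    exact hSmin s h x hs hx
  have hlate : ∀ x ∈ l.drop (τ + 1), x ∉ Y.take (S + 1) := by
    intro x hx
    obtain ⟨t, hτt, ht⟩ := List.mem_drop_iff_getElem?.1 hx
    rw [List.take_add_one, hSv, Option.toList_some, List.mem_append, List.mem_singleton, not_or]
    exact ⟨hprefix x (List.drop_subset_drop_left l (by omega) hx), hτmax t hτt x ht⟩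
  have hdrop : l.drop τ = v :: l.drop (τ + 1) := by
    obtain ⟨hτlen, hτget⟩ := List.getElem?_eq_some_iff.1 hτv
    rw [List.drop_eq_getElem_cons hτlen, hτget]
  have hv : v ∉ l.drop (τ + 1) := fun hv =>
    have ⟨t, hτt, ht⟩ := List.mem_drop_iff_getElem?.1 hv
    hτmax t hτt v ht rfl
  refine ⟨hTτ, ?_⟩
  rw [fwdLE_eq_loopEraseAux_take_drop l (τ + 1),
    fwdLE_take_eq_take_succ hTτ hτv hSv fun x hx =>
      hprefix x (List.drop_subset_drop_left l T.le_succ hx),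
    loopEraseAux_eq_append_fwdLE hlate, hdrop, fwdLE_cons_of_not_mem hv, List.tail_cons]

/-- Decomposition of the forward loop-erasure at an intermediate time `T`: let
`Y` be the forward loop-erasure of the initial segment `(x_0, …, x_T)`, let `S`
be the first index with `Y S ∈ {x_T, …, x_n}` (say `Y S = v`), and let `τ` be
the last time at which the path visits `v`. Then `τ ≥ T`, and the forward
loop-erasure of the whole path is the concatenation of `(Y_0, …, Y_S)` with the
forward loop-erasure of `(x_τ, …, x_n)` with its first entry removed. -/
theorem stmt10 (V : Type*) [DecidableEq V] (l : List V) (T S τ : ℕ) (v : V)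
    (hT : T < l.length)
    (hSv : (fwdLE (l.take (T + 1)))[S]? = some v)
    (hSmem : v ∈ l.drop T)
    (hSmin : ∀ s < S, ∀ u, (fwdLE (l.take (T + 1)))[s]? = some u → u ∉ l.drop T)
    (hτv : l[τ]? = some v)
    (hτmax : ∀ t, τ < t → ∀ u, l[t]? = some u → u ≠ v) :
    T ≤ τ ∧
      fwdLE l = (fwdLE (l.take (T + 1))).take (S + 1) ++ (fwdLE (l.drop τ)).tail :=
  stmt10_general V l T S τ v hSv hSmem hSmin hτv hτmax
end
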